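/- Let G be a graph, c ∈ ℕ, and A a periphery component (connected component of low-degree vertices of degree at most ⌊c/2⌋+1). If some edge {u,v} ∈ E(A) forms an induced P_3 with fewer than c other edges of G, then A is good: for every STC-labeling L with E(A) ⊆ W_L there exists an STC-labeling L' agreeing with L outside E(A) and having no weak edge inside E(A). -/

import Mathlib

/-!
Recolour the edges of `A` greedily, farthest from `u` first and `s(u, v)` last. An edge `xy` of
`A` meets at most `(deg x - 1) + (deg y - 1) ≤ c` other edges, and when it is coloured one of
them, an edge `xw` leading one step closer to `u` (or `s(u, v)` itself), is still weak. So fewer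
than `c` strong colours are blocked and a free one exists; for `s(u, v)` this is the hypothesis
on its conflicts.
-/

open SimpleGraph

def IsSTCLabeling {V : Type*} (G : SimpleGraph V) (c : ℕ) (ℓ : Sym2 V → ℕ) : Prop :=
  (∀ e ∈ G.edgeSet, ℓ e ≤ c) ∧
  ∀ u v w : V, u ≠ w → G.Adj u v → G.Adj v w → ¬ G.Adj u w →
    ℓ s(u, v) = ℓ s(v, w) → ℓ s(u, v) = 0

/-- A periphery component `A` is good: any STC-labeling with all edges of
`E(A)` weak can be modified, keeping all labels outside `E(A)`, so that
no edge of `E(A)` is weak. -/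
def IsGoodComponent {V : Type*} (G : SimpleGraph V) (c : ℕ) (A : Set V) : Prop :=
  ∀ ℓ : Sym2 V → ℕ, IsSTCLabeling G c ℓ →
    (∀ e ∈ G.edgeSet, (∀ x ∈ e, x ∈ A) → ℓ e = 0) →
    ∃ ℓ' : Sym2 V → ℕ, IsSTCLabeling G c ℓ' ∧
      (∀ e ∈ G.edgeSet, ¬ (∀ x ∈ e, x ∈ A) → ℓ' e = ℓ e) ∧
      (∀ e ∈ G.edgeSet, (∀ x ∈ e, x ∈ A) → ℓ' e ≠ 0)

namespace SimpleGraph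

variable {V : Type*} (G : SimpleGraph V)

def FormInducedP3 (e f : Sym2 V) : Prop :=
  ∃ x y z, x ≠ z ∧ G.Adj x y ∧ G.Adj y z ∧ ¬ G.Adj x z ∧ e = s(x, y) ∧ f = s(y, z)

def edgesIn (A : Set V) : Set (Sym2 V) :=
  {e ∈ G.edgeSet | ∀ x ∈ e, x ∈ A}

variable {G}

theorem FormInducedP3.symm {e f : Sym2 V} (h : G.FormInducedP3 e f) : G.FormInducedP3 f e := by
  obtain ⟨x, y, z, hxz, hxy, hyz, hnxz, rfl, rfl⟩ := h
  exact ⟨z, y, x, hxz.symm, hyz.symm, hxy.symm, fun h => hnxz h.symm, Sym2.eq_swap, Sym2.eq_swap⟩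

theorem FormInducedP3.ne {e f : Sym2 V} (h : G.FormInducedP3 e f) : e ≠ f := by
  obtain ⟨x, y, z, hxz, hxy, -, -, rfl, rfl⟩ := h
  intro h
  rcases Sym2.eq_iff.mp h with ⟨hxy', -⟩ | ⟨hxz', -⟩
  · exact hxy.ne hxy'
  · exact hxz hxz'

theorem FormInducedP3.mem_incidenceSet {e f : Sym2 V} (h : G.FormInducedP3 e f) :
    ∃ y ∈ e, f ∈ G.incidenceSet y := by
  obtain ⟨x, y, z, -, -, hyz, -, rfl, rfl⟩ := h
  exact ⟨y, Sym2.mem_mk_right x y, (G.mem_incidenceSet y z).mpr hyz⟩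

theorem ncard_incidenceSet (v : V) : (G.incidenceSet v).ncard = (G.neighborSet v).ncard := by
  classical
  exact Nat.card_congr (G.incidenceSetEquivNeighborSet v)

theorem ncard_formInducedP3_ne_add_three_le [Finite V] {x y w : V} (hxy : G.Adj x y)
    (hxw : G.Adj x w) (hwy : w ≠ y) :
    {f | G.FormInducedP3 s(x, y) f ∧ f ≠ s(x, w)}.ncard + 3 ≤
      (G.neighborSet x).ncard + (G.neighborSet y).ncard := by
  have hsub : {f | G.FormInducedP3 s(x, y) f ∧ f ≠ s(x, w)} ⊆
      (G.incidenceSet x ∪ G.incidenceSet y) \ {s(x, y), s(x, w)} := by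
    rintro f ⟨hf, hfw⟩
    obtain ⟨b, hb, hfb⟩ := hf.mem_incidenceSet
    refine ⟨?_, ?_⟩
    · rcases Sym2.mem_iff.mp hb with rfl | rfl
      exacts [Or.inl hfb, Or.inr hfb]
    · rintro (h | h)
      exacts [hf.ne h.symm, hfw h]
  have hpair : ({s(x, y), s(x, w)} : Set (Sym2 V)) ⊆ G.incidenceSet x ∪ G.incidenceSet y :=
    Set.insert_subset (Or.inl ((G.mem_incidenceSet x y).mpr hxy))
      (Set.singleton_subset_iff.mpr (Or.inl ((G.mem_incidenceSet x w).mpr hxw)))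
  have hpair_card : ({s(x, y), s(x, w)} : Set (Sym2 V)).ncard = 2 :=
    Set.ncard_pair fun h => hwy (Sym2.congr_right.mp h).symm
  have hunion := Set.ncard_union_add_ncard_inter (G.incidenceSet x) (G.incidenceSet y)
  rw [G.incidenceSet_inter_incidenceSet_of_adj hxy, Set.ncard_singleton, ncard_incidenceSet,
    ncard_incidenceSet] at hunion
  have := Set.ncard_le_ncard hsub
  rw [Set.ncard_sdiff hpair, hpair_card] at this
  have := Set.ncard_le_ncard hpair
  omega

end SimpleGraph

namespace IsSTCLabeling

variable {V : Type*} {G : SimpleGraph V} {c : ℕ} {ℓ : Sym2 V → ℕ}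

theorem update [DecidableEq V] (hℓ : IsSTCLabeling G c ℓ) {e : Sym2 V} {a : ℕ} (ha : a ≤ c)
    (hfresh : ∀ f, G.FormInducedP3 e f → ℓ f ≠ a) :
    IsSTCLabeling G c (Function.update ℓ e a) := by
  refine ⟨fun f hf => ?_, fun x y z hxz hxy hyz hnxz heq => ?_⟩
  · rcases eq_or_ne f e with rfl | hfe
    · rwa [Function.update_self]
    · rw [Function.update_of_ne hfe]
      exact hℓ.1 f hf
  have hP3 : G.FormInducedP3 s(x, y) s(y, z) := ⟨x, y, z, hxz, hxy, hyz, hnxz, rfl, rfl⟩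
  rcases eq_or_ne s(x, y) e with rfl | h₁
  · rw [Function.update_self, Function.update_of_ne hP3.ne.symm] at heq
    exact absurd heq.symm (hfresh _ hP3)
  rcases eq_or_ne s(y, z) e with rfl | h₂
  · rw [Function.update_self, Function.update_of_ne hP3.ne] at heq
    exact absurd heq (hfresh _ hP3.symm)
  rw [Function.update_of_ne h₁, Function.update_of_ne h₂] at heq
  rw [Function.update_of_ne h₁]
  exact hℓ.2 x y z hxz hxy hyz hnxz heq

theorem exists_update [Finite V] [DecidableEq V] (hℓ : IsSTCLabeling G c ℓ) (e : Sym2 V)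
    (hc : {f | G.FormInducedP3 e f ∧ ℓ f ≠ 0}.ncard < c) :
    ∃ a, 0 < a ∧ IsSTCLabeling G c (Function.update ℓ e a) := by
  have hlt : (ℓ '' {f | G.FormInducedP3 e f ∧ ℓ f ≠ 0}).ncard < (Set.Ioc 0 c).ncard := by
    rw [Set.ncard_Ioc_nat]
    exact (Set.ncard_image_le (Set.toFinite _)).trans_lt hc
  obtain ⟨a, ⟨ha₀, hac⟩, ha⟩ := Set.exists_mem_notMem_of_ncard_lt_ncard hlt
  refine ⟨a, ha₀, hℓ.update hac fun f hf hfa => ha ⟨f, ⟨hf, ?_⟩, hfa⟩⟩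
  omega

/-- The edges of `S` are coloured in order of decreasing `p`, so when `e` is coloured every
`f ∈ S` with `p f < p e` is still weak and cannot clash with it. -/
theorem exists_pos_on [Finite V] (hℓ : IsSTCLabeling G c ℓ) {S : Set (Sym2 V)}
    (hS : ∀ e ∈ S, ℓ e = 0) (p : Sym2 V → ℕ)
    (hp : ∀ e ∈ S, {f | G.FormInducedP3 e f ∧ ¬ (f ∈ S ∧ p f < p e)}.ncard < c) :
    ∃ ℓ', IsSTCLabeling G c ℓ' ∧ (∀ e ∉ S, ℓ' e = ℓ e) ∧ ∀ e ∈ S, ℓ' e ≠ 0 := by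
  classical
  obtain ⟨s, rfl⟩ := S.toFinite.exists_finset_coe
  suffices ∀ t ⊆ s, ∃ ℓ', IsSTCLabeling G c ℓ' ∧ (∀ e ∉ t, ℓ' e = ℓ e) ∧ ∀ e ∈ t, ℓ' e ≠ 0 by
    simpa using this s subset_rfl
  intro t
  induction t using Finset.induction_on_min_value p with
  | empty => exact fun _ => ⟨ℓ, hℓ, fun _ _ => rfl, by simp⟩
  | insert a t hat hmin ih =>
    intro hts
    obtain ⟨ℓ', hℓ', hout, hin⟩ := ih ((Finset.subset_insert a t).trans hts)
    have has : a ∈ s := hts (Finset.mem_insert_self a t)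
    have hactive : {f | G.FormInducedP3 a f ∧ ℓ' f ≠ 0} ⊆
        {f | G.FormInducedP3 a f ∧ ¬ (f ∈ (s : Set (Sym2 V)) ∧ p f < p a)} := by
      rintro f ⟨hf, hf0⟩
      refine ⟨hf, fun ⟨hfs, hfa⟩ => hf0 ?_⟩
      have hft : f ∉ t := fun hft => (hmin f hft).not_gt hfa
      rw [hout f hft]
      exact hS f hfs
    obtain ⟨b, hb, hℓb⟩ :=
      hℓ'.exists_update a ((Set.ncard_le_ncard hactive).trans_lt (hp a has))
    refine ⟨Function.update ℓ' a b, hℓb, fun e he => ?_, fun e he => ?_⟩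
    · rw [Finset.mem_insert, not_or] at he
      rw [Function.update_of_ne he.1, hout e he.2]
    · rcases eq_or_ne e a with rfl | hea
      · rw [Function.update_self]
        exact hb.ne'
      · rw [Function.update_of_ne hea]
        exact hin e ((Finset.mem_insert.mp he).resolve_left hea)

end IsSTCLabeling

namespace SimpleGraph

variable {V : Type*} {G : SimpleGraph V}

theorem Reachable.exists_adj_dist_lt {x u : V} (hr : G.Reachable x u) (hne : x ≠ u) :
    ∃ y, G.Adj x y ∧ G.dist y u < G.dist x u := by
  obtain ⟨p, hp⟩ := hr.exists_walk_length_eq_dist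
  cases p with
  | nil => exact absurd rfl hne
  | cons hxy q =>
    refine ⟨_, hxy, ?_⟩
    have := dist_le q
    rw [Walk.length_cons] at hp
    omega

theorem ConnectedComponent.exists_descent {P : Set V} (K : (G.induce P).ConnectedComponent)
    {u : V} (hu : u ∈ Subtype.val '' K.supp) :
    ∃ d : V → ℕ, ∀ x ∈ Subtype.val '' K.supp, x ≠ u →
      ∃ y ∈ Subtype.val '' K.supp, G.Adj x y ∧ d y < d x := by
  obtain ⟨u, hu, rfl⟩ := hu
  refine ⟨Function.extend Subtype.val (fun x => (G.induce P).dist x u) 0, ?_⟩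
  rintro _ ⟨x, hx, rfl⟩ hxu
  obtain ⟨y, hxy, hlt⟩ :=
    (K.reachable_of_mem_supp hx hu).exists_adj_dist_lt fun h => hxu (congrArg _ h)
  refine ⟨y, ⟨y, K.mem_supp_of_adj_mem_supp hx hxy, rfl⟩, hxy, ?_⟩
  rwa [Subtype.val_injective.extend_apply, Subtype.val_injective.extend_apply]

end SimpleGraph

section GreedyOrder

variable {V : Type*} {G : SimpleGraph V}

open Classical in
/-- Fed to `IsSTCLabeling.exists_pos_on`, this colours `s(u, v)` last. -/
noncomputable def edgeRank (u v : V) (d : V → ℕ) (e : Sym2 V) : ℕ :=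
  if e = s(u, v) then 0 else (e.map d).inf + 1

theorem exists_adj_edgeRank_lt {A : Set V} {d : V → ℕ} {u v : V}
    (hdesc : ∀ x ∈ A, x ≠ u → ∃ y ∈ A, G.Adj x y ∧ d y < d x) (huv : G.Adj u v) (hv : v ∈ A)
    {x y : V} (hx : x ∈ A) (hne : s(x, y) ≠ s(u, v)) (hxy : d x ≤ d y) :
    ∃ w ∈ A, G.Adj x w ∧ w ≠ y ∧ edgeRank u v d s(x, w) < edgeRank u v d s(x, y) := by
  have hrank : edgeRank u v d s(x, y) = d x + 1 := by
    simp only [edgeRank, hne, if_false, Sym2.map_mk, Sym2.inf_mk]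
    omega
  rcases eq_or_ne x u with rfl | hxu
  · refine ⟨v, hv, huv, fun h => hne (h ▸ rfl), ?_⟩
    rw [hrank]
    simp [edgeRank]
  · obtain ⟨z, hz, hxz, hzx⟩ := hdesc x hx hxu
    refine ⟨z, hz, hxz, by rintro rfl; omega, ?_⟩
    rw [hrank, edgeRank]
    split_ifs
    · omega
    · simp only [Sym2.map_mk, Sym2.inf_mk]
      omega

theorem ncard_formInducedP3_unsettled_lt [Finite V] {c : ℕ} {A : Set V} {d : V → ℕ} {u v : V}
    (hdeg : ∀ x ∈ A, (G.neighborSet x).ncard ≤ c / 2 + 1)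
    (hdesc : ∀ x ∈ A, x ≠ u → ∃ y ∈ A, G.Adj x y ∧ d y < d x)
    (huv : G.Adj u v) (hv : v ∈ A) (hfew : {f | G.FormInducedP3 s(u, v) f}.ncard < c)
    {e : Sym2 V} (he : e ∈ G.edgesIn A) :
    {f | G.FormInducedP3 e f ∧
      ¬ (f ∈ G.edgesIn A ∧ edgeRank u v d f < edgeRank u v d e)}.ncard < c := by
  rcases eq_or_ne e s(u, v) with rfl | hne
  · exact (Set.ncard_le_ncard fun f hf => hf.1).trans_lt hfew
  induction e using Sym2.ind with | _ x y => ?_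
  wlog hxy : d x ≤ d y generalizing x y
  · have := this y x (Sym2.eq_swap ▸ he) (Sym2.eq_swap ▸ hne) (le_of_not_ge hxy)
    rwa [Sym2.eq_swap (a := y)] at this
  obtain ⟨hxyE : G.Adj x y, hxyA⟩ := he
  have hx := hxyA x (Sym2.mem_mk_left x y)
  obtain ⟨w, hw, hxw, hwy, hrank⟩ := exists_adj_edgeRank_lt hdesc huv hv hx hne hxy
  have hunsettled : {f | G.FormInducedP3 s(x, y) f ∧
      ¬ (f ∈ G.edgesIn A ∧ edgeRank u v d f < edgeRank u v d s(x, y))} ⊆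
      {f | G.FormInducedP3 s(x, y) f ∧ f ≠ s(x, w)} := by
    rintro f ⟨hf, hfS⟩
    refine ⟨hf, ?_⟩
    rintro rfl
    refine hfS ⟨⟨hxw, fun z hz => ?_⟩, hrank⟩
    rcases Sym2.mem_iff.mp hz with rfl | rfl
    exacts [hx, hw]
  have := Set.ncard_le_ncard hunsettled
  have := G.ncard_formInducedP3_ne_add_three_le hxyE hxw hwy
  have := hdeg x hx
  have := hdeg y (hxyA y (Sym2.mem_mk_right x y))
  omega

theorem isGoodComponent_of_descent [Finite V] {c : ℕ} {A : Set V} {d : V → ℕ} {u v : V}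
    (hdeg : ∀ x ∈ A, (G.neighborSet x).ncard ≤ c / 2 + 1)
    (hdesc : ∀ x ∈ A, x ≠ u → ∃ y ∈ A, G.Adj x y ∧ d y < d x)
    (huv : G.Adj u v) (hv : v ∈ A)
    (hfew : {f | G.FormInducedP3 s(u, v) f}.ncard < c) : IsGoodComponent G c A := by
  intro ℓ hℓ hweak
  obtain ⟨ℓ', hℓ', hout, hin⟩ := hℓ.exists_pos_on (fun e he => hweak e he.1 he.2)
    (edgeRank u v d) fun e he => ncard_formInducedP3_unsettled_lt hdeg hdesc huv hv hfew he
  exact ⟨ℓ', hℓ', fun e _ heA => hout e fun h => heA h.2, fun e he heA => hin e ⟨he, heA⟩⟩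

end GreedyOrder

theorem few_conflicts_implies_good_general {V : Type*} [Fintype V]
    (G : SimpleGraph V) (c : ℕ)
    (Pset : Set V) (hP : Pset = {v : V | (G.neighborSet v).ncard ≤ c / 2 + 1})
    (K : (G.induce Pset).ConnectedComponent)
    (A : Set V) (hA : A = (fun x : ↥Pset => (x : V)) '' K.supp)
    (u v : V) (huv : G.Adj u v) (hu : u ∈ A) (hv : v ∈ A)
    (hfew : {f ∈ G.edgeSet | f ≠ s(u, v) ∧ ∃ w : V,
        (f = s(v, w) ∧ G.Adj v w ∧ ¬ G.Adj u w ∧ u ≠ w) ∨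
        (f = s(u, w) ∧ G.Adj u w ∧ ¬ G.Adj v w ∧ v ≠ w)}.ncard < c) :
    IsGoodComponent G c A := by
  subst hA hP
  obtain ⟨d, hdesc⟩ := K.exists_descent hu
  refine isGoodComponent_of_descent ?_ hdesc huv hv ((Set.ncard_le_ncard ?_).trans_lt hfew)
  · rintro _ ⟨x, -, rfl⟩
    exact x.2
  · intro f hf
    obtain ⟨x, y, z, hxz, -, hyz, hnxz, he, rfl⟩ := id hf
    refine ⟨hyz, hf.ne.symm, z, ?_⟩
    rcases Sym2.eq_iff.mp he with ⟨rfl, rfl⟩ | ⟨rfl, rfl⟩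
    exacts [Or.inl ⟨rfl, hyz, hnxz, hxz⟩, Or.inr ⟨rfl, hyz, hnxz, hxz⟩]

/-- If some edge `{u,v}` inside a periphery component `A` forms an induced `P₃`
with fewer than `c` other edges of `G`, then `A` is good. -/
theorem few_conflicts_implies_good {V : Type*} [Fintype V] [DecidableEq V]
    (G : SimpleGraph V) (c : ℕ)
    (Pset : Set V) (hP : Pset = {v : V | (G.neighborSet v).ncard ≤ c / 2 + 1})
    (K : (G.induce Pset).ConnectedComponent)
    (A : Set V) (hA : A = (fun x : ↥Pset => (x : V)) '' K.supp)
    (u v : V) (huv : G.Adj u v) (hu : u ∈ A) (hv : v ∈ A)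
    (hfew : {f ∈ G.edgeSet | f ≠ s(u, v) ∧ ∃ w : V,
        (f = s(v, w) ∧ G.Adj v w ∧ ¬ G.Adj u w ∧ u ≠ w) ∨
        (f = s(u, w) ∧ G.Adj u w ∧ ¬ G.Adj v w ∧ v ≠ w)}.ncard < c) :
    IsGoodComponent G c A :=
  few_conflicts_implies_good_general G c Pset hP K A hA u v huv hu hv hfew
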